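/- Under the assumptions of the previous proposition (restricted eigenvalue condition Δ*‖v‖ ≤ ‖Xv‖/√n on K, deterministic bounds ‖Xs‖ ≤ c₁√(nk), √n ≤ c₂√k, ‖ε‖ ≤ c₃√n), the Lasso error h = b̂ − b* satisfies ‖h‖ ≤ (‖Xh‖/√n)·[c₂c₃/λ + Δ*^{-1}(1 + c₁c₂c₃/λ)]. -/

import Mathlib

/-!
Comparing the Lasso objective at `b̂` with its value at `b*` gives the basic inequality
`λ√n (‖b̂‖₁ - ‖b*‖₁) ≤ ⟪Xh, ε⟫ ≤ ‖Xh‖‖ε‖`, and since `b*` has sign pattern `s`,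
`‖b̂‖₁ - ‖b*‖₁ ≥ sᵀh + ∑_{j ∉ S} |h_j|`. Hence removing from `h` the multiple `a s`,
`a = ‖Xh‖‖ε‖/(kλ√n)`, leaves a vector `v` of the cone `K`, to which the restricted eigenvalue
condition applies; the triangle inequality and `‖s‖ = √k` then bound `‖h‖ ≤ a√k + ‖v‖`.
-/

open Matrix BigOperators

noncomputable def vnorm {m : ℕ} (v : Fin m → ℝ) : ℝ := Real.sqrt (∑ i, v i ^ 2)

noncomputable def vnorm1 {m : ℕ} (v : Fin m → ℝ) : ℝ := ∑ i, |v i|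

open Finset

section EuclideanNorm

variable {m : ℕ}

theorem vnorm_eq_norm (v : Fin m → ℝ) : vnorm v = ‖WithLp.toLp 2 v‖ := by
  simp [vnorm, EuclideanSpace.norm_eq]

theorem vnorm_nonneg (v : Fin m → ℝ) : 0 ≤ vnorm v :=
  Real.sqrt_nonneg _

theorem vnorm_sq (v : Fin m → ℝ) : vnorm v ^ 2 = v ⬝ᵥ v := by
  rw [vnorm, Real.sq_sqrt (by positivity)]
  simp only [dotProduct, sq]

theorem vnorm_add_le (a b : Fin m → ℝ) : vnorm (a + b) ≤ vnorm a + vnorm b := by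
  simpa only [vnorm_eq_norm, WithLp.toLp_add] using norm_add_le _ _

theorem vnorm_sub_le (a b : Fin m → ℝ) : vnorm (a - b) ≤ vnorm a + vnorm b := by
  simpa only [vnorm_eq_norm, WithLp.toLp_sub] using norm_sub_le _ _

theorem vnorm_smul (c : ℝ) (v : Fin m → ℝ) : vnorm (c • v) = |c| * vnorm v := by
  simp only [vnorm_eq_norm, WithLp.toLp_smul, norm_smul, Real.norm_eq_abs]

theorem dotProduct_le_vnorm_mul_vnorm (a b : Fin m → ℝ) : a ⬝ᵥ b ≤ vnorm a * vnorm b := by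
  simpa only [vnorm_eq_norm, EuclideanSpace.inner_toLp_toLp, star_trivial, dotProduct_comm b]
    using real_inner_le_norm (WithLp.toLp 2 a) (WithLp.toLp 2 b)

theorem vnorm_sub_sq (a b : Fin m → ℝ) :
    vnorm (a - b) ^ 2 = vnorm a ^ 2 - 2 * (a ⬝ᵥ b) + vnorm b ^ 2 := by
  simp only [vnorm_sq, dotProduct_sub, sub_dotProduct, dotProduct_comm b a]
  ring

end EuclideanNorm

theorem lasso_basic_inequality {n p : ℕ} (X : Matrix (Fin n) (Fin p) ℝ)
    (bstar bhat : Fin p → ℝ) (ε y : Fin n → ℝ) (μ : ℝ) (hy : y = X *ᵥ bstar + ε)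
    (hbhat : ∀ b : Fin p → ℝ,
      (1/2) * (vnorm (X *ᵥ bhat - y))^2 + μ * vnorm1 bhat ≤
      (1/2) * (vnorm (X *ᵥ b - y))^2 + μ * vnorm1 b) :
    μ * (vnorm1 bhat - vnorm1 bstar) ≤ vnorm (X *ᵥ (bhat - bstar)) * vnorm ε := by
  have hopt := hbhat bstar
  have hres : X *ᵥ bhat - y = X *ᵥ (bhat - bstar) - ε := by
    rw [hy, mulVec_sub]; abel
  have hres_star : X *ᵥ bstar - y = 0 - ε := by rw [hy]; abel
  rw [hres, hres_star, vnorm_sub_sq, vnorm_sub_sq, vnorm_sq 0, zero_dotProduct,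
    zero_dotProduct] at hopt
  have hcs := dotProduct_le_vnorm_mul_vnorm (X *ᵥ (bhat - bstar)) ε
  linarith [sq_nonneg (vnorm (X *ᵥ (bhat - bstar)))]

theorem sign_mul_self_eq_abs (β : ℝ) : Real.sign β * β = |β| := by
  rcases lt_trichotomy β 0 with hβ | rfl | hβ
  · rw [Real.sign_of_neg hβ, abs_of_neg hβ, neg_one_mul]
  · simp
  · rw [Real.sign_of_pos hβ, abs_of_pos hβ, one_mul]

theorem mul_sub_add_ite_le_abs_sub_abs {σ x β : ℝ} (hσ : σ = -1 ∨ σ = 0 ∨ σ = 1)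
    (hβ : β ≠ 0 → Real.sign β = σ) :
    σ * (x - β) + (if σ ≠ 0 then 0 else |x - β|) ≤ |x| - |β| := by
  have hσβ : σ * β = |β| := by
    by_cases hβ0 : β = 0
    · simp [hβ0]
    · rw [← hβ hβ0, sign_mul_self_eq_abs]
  have hσx : σ * x ≤ |x| := by
    rcases hσ with rfl | rfl | rfl <;> simp [neg_le_abs, le_abs_self]
  by_cases hσ0 : σ = 0
  · rw [hσ0, zero_mul, eq_comm, abs_eq_zero] at hσβ
    simp [hσ0, hσβ]
  · rw [if_pos hσ0]
    linarith

def signCone {p : ℕ} (s : Fin p → ℝ) : Set (Fin p → ℝ) :=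
  {h | ∑ j ∈ (univ.filter fun j => s j ≠ 0)ᶜ, |h j| ≤ -(s ⬝ᵥ h)}

section SignPattern

variable {p : ℕ} {s : Fin p → ℝ}

theorem sum_compl_support_eq (h : Fin p → ℝ) :
    ∑ j ∈ (univ.filter fun j => s j ≠ 0)ᶜ, |h j| = ∑ j, if s j ≠ 0 then 0 else |h j| := by
  rw [compl_filter, sum_filter, sum_congr rfl fun j _ => (ite_not _ _ _)]

theorem dotProduct_sub_add_sum_compl_le (hs : ∀ j, s j = -1 ∨ s j = 0 ∨ s j = 1)
    {bstar : Fin p → ℝ} (hsign : ∀ j, bstar j ≠ 0 → Real.sign (bstar j) = s j)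
    (b : Fin p → ℝ) :
    s ⬝ᵥ (b - bstar) + ∑ j ∈ (univ.filter fun j => s j ≠ 0)ᶜ, |(b - bstar) j| ≤
      vnorm1 b - vnorm1 bstar := by
  rw [sum_compl_support_eq, dotProduct, vnorm1, vnorm1, ← sum_add_distrib, ← sum_sub_distrib]
  exact sum_le_sum fun j _ => mul_sub_add_ite_le_abs_sub_abs (hs j) (hsign j)

theorem dotProduct_self_eq_card (hs : ∀ j, s j = -1 ∨ s j = 0 ∨ s j = 1) :
    s ⬝ᵥ s = #(univ.filter fun j => s j ≠ 0) := by
  have hsq : ∀ j, s j * s j = if s j ≠ 0 then 1 else 0 := fun j => by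
    rcases hs j with h | h | h <;> norm_num [h]
  rw [dotProduct, sum_congr rfl fun j _ => hsq j, sum_boole]

theorem sub_smul_mem_signCone {h : Fin p → ℝ} {a : ℝ}
    (hh : s ⬝ᵥ h + ∑ j ∈ (univ.filter fun j => s j ≠ 0)ᶜ, |h j| ≤ a * (s ⬝ᵥ s)) :
    h - a • s ∈ signCone s := by
  have hsum : ∀ j ∈ (univ.filter fun j => s j ≠ 0)ᶜ, |(h - a • s) j| = |h j| := fun j hj => by
    simp_all
  rw [signCone, Set.mem_ofPred_eq, sum_congr rfl hsum, dotProduct_sub, dotProduct_smul,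
    smul_eq_mul]
  linarith

end SignPattern

theorem vnorm_le_of_sub_smul_mem {n p : ℕ} {X : Matrix (Fin n) (Fin p) ℝ}
    {K : Set (Fin p → ℝ)} {Δ c : ℝ} (hΔ : 0 < Δ) (hc : 0 ≤ c)
    (hRE : ∀ v ∈ K, Δ * vnorm v ≤ vnorm (X *ᵥ v) / c)
    {h s : Fin p → ℝ} {a : ℝ} (ha : 0 ≤ a) (hv : h - a • s ∈ K) :
    vnorm h ≤ a * vnorm s + Δ⁻¹ * ((vnorm (X *ᵥ h) + a * vnorm (X *ᵥ s)) / c) := by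
  have hsplit : vnorm h ≤ a * vnorm s + vnorm (h - a • s) := by
    simpa only [add_sub_cancel, vnorm_smul, abs_of_nonneg ha]
      using vnorm_add_le (a • s) (h - a • s)
  have hXv : vnorm (X *ᵥ (h - a • s)) ≤ vnorm (X *ᵥ h) + a * vnorm (X *ᵥ s) := by
    simpa only [mulVec_sub, mulVec_smul, vnorm_smul, abs_of_nonneg ha]
      using vnorm_sub_le (X *ᵥ h) (a • X *ᵥ s)
  have hREv : vnorm (h - a • s) ≤ Δ⁻¹ * (vnorm (X *ᵥ (h - a • s)) / c) :=
    (le_inv_mul_iff₀ hΔ).2 (hRE _ hv)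
  calc vnorm h ≤ a * vnorm s + vnorm (h - a • s) := hsplit
    _ ≤ a * vnorm s + Δ⁻¹ * (vnorm (X *ᵥ (h - a • s)) / c) := by gcongr
    _ ≤ a * vnorm s + Δ⁻¹ * ((vnorm (X *ᵥ h) + a * vnorm (X *ᵥ s)) / c) := by gcongr

theorem decomposition_bound_le {T E N sn sk lam Δ c₁ c₂ c₃ a : ℝ} (hT : 0 ≤ T) (hE : 0 ≤ E)
    (hN : 0 ≤ N) (hsn : 0 < sn) (hsk : 0 < sk) (hlam : 0 < lam) (hΔ : 0 ≤ Δ) (hc₃ : 0 ≤ c₃)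
    (hNle : N ≤ c₁ * (sn * sk)) (hsnle : sn ≤ c₂ * sk) (hEle : E ≤ c₃ * sn)
    (ha : a = T * E / (lam * sn * sk ^ 2)) :
    a * sk + Δ⁻¹ * ((T + a * N) / sn) ≤
      T / sn * (c₂ * c₃ / lam + Δ⁻¹ * (1 + c₁ * c₂ * c₃ / lam)) := by
  have hE' : E ≤ c₂ * c₃ * sk :=
    hEle.trans (by linarith [mul_le_mul_of_nonneg_left hsnle hc₃])
  have hmain : a * sk ≤ T / sn * (c₂ * c₃ / lam) := by
    calc a * sk = T / sn * (E / sk) / lam := by rw [ha]; field_simp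
      _ ≤ T / sn * (c₂ * c₃ * sk / sk) / lam := by gcongr
      _ = T / sn * (c₂ * c₃ / lam) := by field_simp
  have hcross : a * N ≤ T * (c₁ * c₂ * c₃ / lam) := by
    have hEN : E * N ≤ (c₂ * c₃ * sk) * (c₁ * (sn * sk)) :=
      mul_le_mul hE' hNle hN (hE.trans hE')
    calc a * N = T * (E * N) / (lam * sn * sk ^ 2) := by rw [ha]; ring
      _ ≤ T * ((c₂ * c₃ * sk) * (c₁ * (sn * sk))) / (lam * sn * sk ^ 2) := by gcongr
      _ = T * (c₁ * c₂ * c₃ / lam) := by field_simp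
  calc a * sk + Δ⁻¹ * ((T + a * N) / sn)
      ≤ T / sn * (c₂ * c₃ / lam) + Δ⁻¹ * ((T + T * (c₁ * c₂ * c₃ / lam)) / sn) := by gcongr
    _ = T / sn * (c₂ * c₃ / lam + Δ⁻¹ * (1 + c₁ * c₂ * c₃ / lam)) := by ring

theorem stmt_7_general {n p : ℕ} (hn : 0 < n)
    (X : Matrix (Fin n) (Fin p) ℝ) (ε : Fin n → ℝ) (y : Fin n → ℝ)
    (lam Δ c₁ c₂ c₃ : ℝ) (hlam : 0 < lam) (hΔ : 0 < Δ)
    (hc₃ : 0 < c₃)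
    (s : Fin p → ℝ) (hs : ∀ j, s j = -1 ∨ s j = 0 ∨ s j = 1)
    (S : Finset (Fin p)) (hS : S = Finset.univ.filter (fun j => s j ≠ 0))
    (k : ℕ) (hk : k = S.card) (hk1 : 1 ≤ k)
    (K : Set (Fin p → ℝ))
    (hK : K = {h : Fin p → ℝ | ∑ j ∈ Sᶜ, |h j| ≤ -(s ⬝ᵥ h)})
    (hRE : ∀ v ∈ K, Δ * vnorm v ≤ vnorm (X.mulVec v) / Real.sqrt n)
    (hXs : vnorm (X.mulVec s) ≤ c₁ * Real.sqrt ((n : ℝ) * k))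
    (hnk : Real.sqrt n ≤ c₂ * Real.sqrt k)
    (hε : vnorm ε ≤ c₃ * Real.sqrt n)
    (bstar : Fin p → ℝ) (hsign : ∀ j, bstar j ≠ 0 → Real.sign (bstar j) = s j)
    (hy : y = X.mulVec bstar + ε)
    (bhat : Fin p → ℝ)
    (hbhat : ∀ b : Fin p → ℝ,
      (1/2) * (vnorm (X.mulVec bhat - y))^2 + lam * Real.sqrt n * vnorm1 bhat ≤
      (1/2) * (vnorm (X.mulVec b - y))^2 + lam * Real.sqrt n * vnorm1 b) :
    vnorm (bhat - bstar) ≤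
      (vnorm (X.mulVec (bhat - bstar)) / Real.sqrt n) *
        (c₂ * c₃ / lam + Δ⁻¹ * (1 + c₁ * c₂ * c₃ / lam)) := by
  subst hS hK
  set h := bhat - bstar
  set T := vnorm (X *ᵥ h)
  have hsn : 0 < √(n : ℝ) := Real.sqrt_pos.2 (by exact_mod_cast hn)
  have hsk : 0 < √(k : ℝ) := Real.sqrt_pos.2 (by exact_mod_cast hk1)
  have hss : s ⬝ᵥ s = √(k : ℝ) ^ 2 := by
    rw [dotProduct_self_eq_card hs, ← hk, Real.sq_sqrt k.cast_nonneg]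
  have hvs : vnorm s = √(k : ℝ) := by
    rw [← Real.sqrt_sq (vnorm_nonneg s), vnorm_sq, hss, Real.sqrt_sq hsk.le]
  set a := T * vnorm ε / (lam * √(n : ℝ) * √(k : ℝ) ^ 2) with ha
  have hcone : s ⬝ᵥ h + ∑ j ∈ (univ.filter fun j => s j ≠ 0)ᶜ, |h j| ≤ a * (s ⬝ᵥ s) := by
    have hbasic := lasso_basic_inequality X bstar bhat ε y _ hy hbhat
    calc s ⬝ᵥ h + ∑ j ∈ (univ.filter fun j => s j ≠ 0)ᶜ, |h j|
        ≤ vnorm1 bhat - vnorm1 bstar := dotProduct_sub_add_sum_compl_le hs hsign bhat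
      _ ≤ T * vnorm ε / (lam * √(n : ℝ)) := by rw [le_div_iff₀ (by positivity)]; linarith
      _ = a * (s ⬝ᵥ s) := by rw [ha, hss]; field_simp
  have ha0 : 0 ≤ a := by have := vnorm_nonneg (X *ᵥ h); have := vnorm_nonneg ε; positivity
  have hbound := vnorm_le_of_sub_smul_mem hΔ hsn.le hRE ha0 (sub_smul_mem_signCone hcone)
  rw [Real.sqrt_mul (Nat.cast_nonneg n)] at hXs
  rw [hvs] at hbound
  exact hbound.trans (decomposition_bound_le (vnorm_nonneg _) (vnorm_nonneg _) (vnorm_nonneg _)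
    hsn hsk hlam hΔ.le hc₃.le hXs hnk hε ha)

/-- inequality (L2-risk) of Proposition 3.1:
`‖h‖ ≤ (‖Xh‖/√n)·[c₂c₃/λ + Δ*⁻¹(1 + c₁c₂c₃/λ)]`. -/
theorem stmt_7 {n p : ℕ} (hn : 0 < n)
    (X : Matrix (Fin n) (Fin p) ℝ) (ε : Fin n → ℝ) (y : Fin n → ℝ)
    (lam Δ c₁ c₂ c₃ : ℝ) (hlam : 0 < lam) (hΔ : 0 < Δ)
    (hc₁ : 0 < c₁) (hc₂ : 0 < c₂) (hc₃ : 0 < c₃)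
    (s : Fin p → ℝ) (hs : ∀ j, s j = -1 ∨ s j = 0 ∨ s j = 1)
    (S : Finset (Fin p)) (hS : S = Finset.univ.filter (fun j => s j ≠ 0))
    (k : ℕ) (hk : k = S.card) (hk1 : 1 ≤ k)
    (K : Set (Fin p → ℝ))
    (hK : K = {h : Fin p → ℝ | ∑ j ∈ Sᶜ, |h j| ≤ -(s ⬝ᵥ h)})
    (hRE : ∀ v ∈ K, Δ * vnorm v ≤ vnorm (X.mulVec v) / Real.sqrt n)
    (hXs : vnorm (X.mulVec s) ≤ c₁ * Real.sqrt ((n : ℝ) * k))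
    (hnk : Real.sqrt n ≤ c₂ * Real.sqrt k)
    (hε : vnorm ε ≤ c₃ * Real.sqrt n)
    (bstar : Fin p → ℝ) (hsign : ∀ j, bstar j ≠ 0 → Real.sign (bstar j) = s j)
    (hy : y = X.mulVec bstar + ε)
    (bhat : Fin p → ℝ)
    (hbhat : ∀ b : Fin p → ℝ,
      (1/2) * (vnorm (X.mulVec bhat - y))^2 + lam * Real.sqrt n * vnorm1 bhat ≤
      (1/2) * (vnorm (X.mulVec b - y))^2 + lam * Real.sqrt n * vnorm1 b) :
    vnorm (bhat - bstar) ≤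
      (vnorm (X.mulVec (bhat - bstar)) / Real.sqrt n) *
        (c₂ * c₃ / lam + Δ⁻¹ * (1 + c₁ * c₂ * c₃ / lam)) :=
  stmt_7_general hn X ε y lam Δ c₁ c₂ c₃ hlam hΔ hc₃ s hs S hS k hk hk1 K hK hRE hXs hnk hε bstar
    hsign hy bhat hbhat
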